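/- arXiv:2205.10585 — 4 statements merged into one kernel-verified Lean document; each statement's English description precedes it below -/
import Mathlib

section
/- With the involution ϱ(ℓ) = (1/ℓ(v))ℓ' + (1/ℓ(v))v* on the open half-space V^∨_+ = {ℓ(v)>0}: if Δ̃ = ⋂_{j=1}^k {ℓ : ℓ(v_j) ≥ μ_j} is a polytope contained in V^∨_+, where each v_j = v_j' + ρ_j v with v_j' in the kernel of every element of span(v*), then ϱ(Δ̃) = ⋂_{j=1}^k {ℓ ∈ V^∨_+ : ℓ'(v_j') − μ_j·ℓ(v) ≥ −ρ_j}, where ℓ = ℓ' + ℓ(v)v*. -/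
/-- Image of a polytope `Δ̃ = ⋂ {ℓ(v_j) ≥ μ_j}` contained in the half-space `{ℓ(v)>0}`
under the involution `ϱ`: it is cut out by `ℓ'(v_j') − μ_j ℓ(v) ≥ −ρ_j`, where
`v_j = p_j + ρ_j v` with `v*(p_j) = 0` and `ℓ = ℓ' + ℓ(v)v*`. -/
theorem conic_transform_image
    {V : Type*} [AddCommGroup V] [Module ℝ V]
    (v : V) (hv : v ≠ 0)
    (vs : Module.Dual ℝ V) (hvs : vs v = 1)
    (ϱ : Module.Dual ℝ V → Module.Dual ℝ V)
    (hϱ : ∀ ℓ, ϱ ℓ = (ℓ v)⁻¹ • (ℓ - ℓ v • vs) + (ℓ v)⁻¹ • vs)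
    {k : ℕ} (vj p : Fin k → V) (ρ μ : Fin k → ℝ)
    (hdec : ∀ j, vj j = p j + ρ j • v)
    (hp : ∀ j, vs (p j) = 0)
    (hhalf : ∀ ℓ : Module.Dual ℝ V, (∀ j, μ j ≤ ℓ (vj j)) → 0 < ℓ v) :
    ϱ '' {ℓ : Module.Dual ℝ V | ∀ j, μ j ≤ ℓ (vj j)}
      = {ℓ : Module.Dual ℝ V |
          0 < ℓ v ∧ ∀ j, -(ρ j) ≤ (ℓ - ℓ v • vs) (p j) - μ j * ℓ v} := by
  have hϱv : ∀ ℓ : Module.Dual ℝ V, (ϱ ℓ) v = (ℓ v)⁻¹ := by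
    intro ℓ
    simp [hϱ, hvs, mul_sub]
  have hϱp : ∀ (ℓ : Module.Dual ℝ V) (j : Fin k), (ϱ ℓ) (p j) = (ℓ v)⁻¹ * ℓ (p j) := by
    intro ℓ j
    simp [hϱ, hp]
  have hϱϱ : ∀ ℓ : Module.Dual ℝ V, ℓ v ≠ 0 → ϱ (ϱ ℓ) = ℓ := by
    intro ℓ hℓ
    have h1 : (ϱ ℓ) v = (ℓ v)⁻¹ := hϱv ℓ
    rw [hϱ (ϱ ℓ), h1, hϱ ℓ]
    ext x
    simp only [LinearMap.add_apply, LinearMap.smul_apply, LinearMap.sub_apply, smul_eq_mul,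
      inv_inv]
    field_simp
    ring
  ext m
  simp only [Set.mem_image, Set.mem_setOf_eq]
  constructor
  · rintro ⟨ℓ, hℓ, rfl⟩
    have hpos := hhalf ℓ hℓ
    have hne : ℓ v ≠ 0 := ne_of_gt hpos
    refine ⟨by rw [hϱv]; positivity, fun j => ?_⟩
    have h1 := hℓ j
    rw [hdec j] at h1
    simp only [map_add, map_smul, smul_eq_mul] at h1
    -- h1 : μ j ≤ ℓ (p j) + ρ j * ℓ v
    simp only [LinearMap.sub_apply, LinearMap.smul_apply, smul_eq_mul, hϱv, hϱp, hp,
      mul_zero, sub_zero]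
    rw [← sub_nonneg]
    have key : (ℓ v)⁻¹ * ℓ (p j) - μ j * (ℓ v)⁻¹ - -(ρ j)
        = (ℓ (p j) + ρ j * ℓ v - μ j) * (ℓ v)⁻¹ := by
      field_simp
      ring
    rw [key]
    have : 0 ≤ ℓ (p j) + ρ j * ℓ v - μ j := by linarith
    positivity
  · rintro ⟨hmv, hm⟩
    have hne : m v ≠ 0 := ne_of_gt hmv
    refine ⟨ϱ m, fun j => ?_, hϱϱ m hne⟩
    have h1 := hm j
    simp only [LinearMap.sub_apply, LinearMap.smul_apply, smul_eq_mul, hp,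
      mul_zero, sub_zero] at h1
    -- h1 : -(ρ j) ≤ m (p j) - μ j * m v
    rw [hdec j]
    simp only [map_add, map_smul, smul_eq_mul, hϱv, hϱp]
    have key : (m v)⁻¹ * m (p j) + ρ j * (m v)⁻¹ - μ j
        = (m (p j) - μ j * m v + ρ j) * (m v)⁻¹ := by
      field_simp
      ring
    rw [← sub_nonneg, key]
    have : 0 ≤ m (p j) - μ j * m v + ρ j := by linarith
    positivity
end

section
/- Let Γ ⊂ V be a convex polytope and W ⊆ V an affine subspace meeting Γ transversely. If W ∩ Γ ≠ ∅, then W meets the interior Γ⁰ of Γ: W ∩ Γ⁰ ≠ ∅. -/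
/-- The relative interior (open face) with exact equality set `I` of the polytope
`⋂ⱼ {x : l j x ≥ lam j}`; for `I = ∅` this is the interior of the polytope. -/
def openFace {V : Type*} [AddCommGroup V] [Module ℝ V] {s : ℕ}
    (l : Fin s → Module.Dual ℝ V) (lam : Fin s → ℝ) (I : Finset (Fin s)) : Set V :=
  {x | (∀ j ∈ I, l j x = lam j) ∧ ∀ j ∉ I, lam j < l j x}

/-- If the affine subspace `W` meets the full-dimensional polytope
`Γ = ⋂ⱼ {x : l j x ≥ lam j}` transversely and `W ∩ Γ ≠ ∅`, then `W` meets the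
interior `Γ⁰` of `Γ`. -/
theorem transverse_meets_interior
    {V : Type*} [AddCommGroup V] [Module ℝ V] [FiniteDimensional ℝ V]
    {s : ℕ} (l : Fin s → Module.Dual ℝ V) (lam : Fin s → ℝ)
    (W : AffineSubspace ℝ V)
    (htrans : ∀ I : Finset (Fin s), ((W : Set V) ∩ openFace l lam I).Nonempty →
      W.direction ⊔ (⨅ j ∈ I, LinearMap.ker (l j)) = ⊤)
    (hfull : (openFace l lam (∅ : Finset (Fin s))).Nonempty)
    (hne : ((W : Set V) ∩ {x | ∀ j, lam j ≤ l j x}).Nonempty) :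
    ((W : Set V) ∩ openFace l lam (∅ : Finset (Fin s))).Nonempty := by
  classical
  obtain ⟨x, hxW, hxΓ⟩ := hne
  set I : Finset (Fin s) := Finset.univ.filter (fun j => l j x = lam j) with hI
  have hxF : x ∈ openFace l lam I := by
    constructor
    · intro j hj
      simpa [hI] using hj
    · intro j hj
      have h : ¬ l j x = lam j := by simpa [hI] using hj
      exact lt_of_le_of_ne (hxΓ j) (Ne.symm h)
  by_cases hIe : I = ∅
  · exact ⟨x, hxW, by rw [← hIe]; exact hxF⟩
  have htop := htrans I ⟨x, hxW, hxF⟩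
  obtain ⟨y, hy⟩ := hfull
  have hy' : ∀ j, lam j < l j y := fun j => hy.2 j (Finset.notMem_empty j)
  have hmem : y - x ∈ W.direction ⊔ (⨅ j ∈ I, LinearMap.ker (l j)) := by
    rw [htop]; trivial
  obtain ⟨w, hw, k, hk, hwk⟩ := Submodule.mem_sup.mp hmem
  have hk' : ∀ j ∈ I, l j k = 0 := by
    intro j hj
    have h2 := hk
    simp only [Submodule.mem_iInf, LinearMap.mem_ker] at h2
    exact h2 j hj
  have huniv : (Finset.univ : Finset (Fin s)).Nonempty := by
    obtain ⟨j, _⟩ := Finset.nonempty_iff_ne_empty.mpr hIe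
    exact ⟨j, Finset.mem_univ j⟩
  set c : Fin s → ℝ := fun j => if j ∈ I then 1 else (l j x - lam j) / (|l j w| + 1) with hc
  have hcpos : ∀ j, 0 < c j := by
    intro j
    by_cases h : j ∈ I
    · simp [hc, h]
    · have hgap : lam j < l j x := hxF.2 j h
      have : 0 < |l j w| + 1 := by positivity
      simp only [hc, h, if_false]
      exact div_pos (by linarith) this
  set t : ℝ := Finset.univ.inf' huniv c with ht
  have ht0 : 0 < t := by
    rw [ht, Finset.lt_inf'_iff]
    exact fun j _ => hcpos j
  refine ⟨x + t • w, ?_, ?_, ?_⟩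
  · have := AffineSubspace.vadd_mem_of_mem_direction (W.direction.smul_mem t hw) hxW
    simpa [add_comm] using this
  · intro j hj
    exact absurd hj (Finset.notMem_empty j)
  · intro j _
    have hval : l j (x + t • w) = l j x + t * l j w := by
      simp [map_add, map_smul, smul_eq_mul]
    rw [hval]
    by_cases h : j ∈ I
    · have hxj : l j x = lam j := hxF.1 j h
      have hwval : l j w = l j y - lam j := by
        have : l j (w + k) = l j (y - x) := by rw [hwk]
        simp only [map_add, map_sub] at this
        rw [hk' j h, hxj] at this
        linarith
      have := hy' j
      nlinarith
    · have hgap : lam j < l j x := hxF.2 j h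
      have htc : t ≤ c j := Finset.inf'_le c (Finset.mem_univ j)
      have hcj : c j = (l j x - lam j) / (|l j w| + 1) := by simp [hc, h]
      have hpos : (0:ℝ) < |l j w| + 1 := by positivity
      have hcm : c j * (|l j w| + 1) = l j x - lam j := by
        rw [hcj, div_mul_cancel₀]; positivity
      have habs : -|l j w| ≤ l j w := neg_abs_le _
      have h1 : t * |l j w| ≤ c j * |l j w| :=
        mul_le_mul_of_nonneg_right htc (abs_nonneg _)
      have h2 : c j * |l j w| < l j x - lam j := by nlinarith [hcpos j]
      nlinarith [mul_le_mul_of_nonneg_left habs ht0.le]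
end

section
/- Let Γ ⊂ V be a convex polytope and W an affine subspace meeting Γ transversely. If L is a face of Γ with (Γ ∩ W) ∩ L ≠ ∅, then (Γ ∩ W) ∩ relint(L) ≠ ∅. -/
/-- If `W` meets the polytope `Γ` transversely and `Γ ∩ W` meets the (closed) face `L`
of `Γ` cut out by the equalities indexed by `J`, then `Γ ∩ W` meets the relative
interior of `L`. -/
theorem section_meets_relint_of_face
    {V : Type*} [AddCommGroup V] [Module ℝ V] [FiniteDimensional ℝ V]
    {s : ℕ} (l : Fin s → Module.Dual ℝ V) (lam : Fin s → ℝ)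
    (W : AffineSubspace ℝ V)
    (htrans : ∀ I : Finset (Fin s), ((W : Set V) ∩ openFace l lam I).Nonempty →
      W.direction ⊔ (⨅ j ∈ I, LinearMap.ker (l j)) = ⊤)
    (J : Finset (Fin s)) (hJ : (openFace l lam J).Nonempty)
    (hmeet : ∃ x, x ∈ (W : Set V) ∧ (∀ j, lam j ≤ l j x) ∧ ∀ j ∈ J, l j x = lam j) :
    ((W : Set V) ∩ openFace l lam J).Nonempty := by
  classical
  obtain ⟨x, hxW, hxΓ, hxJ⟩ := hmeet
  obtain ⟨y, hyJeq, hyJlt⟩ := hJ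
  set I : Finset (Fin s) := Finset.univ.filter (fun j => l j x = lam j) with hI
  have hmemI : ∀ j, j ∈ I ↔ l j x = lam j := by
    intro j; simp [hI]
  have hxI : x ∈ openFace l lam I := by
    refine ⟨fun j hj => (hmemI j).mp hj, fun j hj => ?_⟩
    exact lt_of_le_of_ne (hxΓ j) (fun h => hj ((hmemI j).mpr h.symm))
  have htop := htrans I ⟨x, hxW, hxI⟩
  have hyx : y - x ∈ W.direction ⊔ (⨅ j ∈ I, LinearMap.ker (l j)) := by
    rw [htop]; trivial
  obtain ⟨v, hv, k, hk, hvk⟩ := Submodule.mem_sup.mp hyx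
  have hkI : ∀ j ∈ I, l j k = 0 := by
    intro j hj
    have h1 := (Submodule.mem_iInf _).mp hk j
    exact LinearMap.mem_ker.mp ((Submodule.mem_iInf _).mp h1 hj)
  have hJI : ∀ j ∈ J, j ∈ I := fun j hj => (hmemI j).mpr (hxJ j hj)
  have hsum : ∀ j, l j v + l j k = l j y - l j x := by
    intro j
    have := congrArg (l j) hvk
    simpa [map_sub] using this
  have hvJ : ∀ j ∈ J, l j v = 0 := by
    intro j hj
    have h1 := hsum j
    rw [hkI j (hJI j hj), hyJeq j hj, hxJ j hj] at h1
    linarith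
  have hvI : ∀ j ∈ I, j ∉ J → 0 < l j v := by
    intro j hjI hjJ
    have h1 := hsum j
    rw [hkI j hjI] at h1
    have hx' : l j x = lam j := (hmemI j).mp hjI
    have := hyJlt j hjJ
    linarith
  set S : Finset ℝ := insert (1:ℝ) ((Finset.univ.filter (fun j => j ∉ I)).image
      (fun j => (l j x - lam j) / (|l j v| + 1))) with hS
  have hSne : S.Nonempty := ⟨1, Finset.mem_insert_self _ _⟩
  set t := S.min' hSne with ht
  have ht_pos : 0 < t := by
    rw [ht, Finset.lt_min'_iff]
    intro a ha
    rw [hS, Finset.mem_insert] at ha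
    rcases ha with rfl | ha
    · norm_num
    · obtain ⟨j, hj, rfl⟩ := Finset.mem_image.mp ha
      have hjI : j ∉ I := (Finset.mem_filter.mp hj).2
      have hd : 0 < l j x - lam j := by
        have := lt_of_le_of_ne (hxΓ j) (fun h => hjI ((hmemI j).mpr h.symm))
        linarith
      positivity
  have ht_le : ∀ j ∉ I, t * |l j v| < l j x - lam j := by
    intro j hj
    have hmem : (l j x - lam j) / (|l j v| + 1) ∈ S := by
      rw [hS, Finset.mem_insert]
      exact Or.inr (Finset.mem_image.mpr ⟨j, Finset.mem_filter.mpr ⟨Finset.mem_univ j, hj⟩, rfl⟩)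
    have hle : t ≤ (l j x - lam j) / (|l j v| + 1) := Finset.min'_le S _ hmem
    have hpos : (0:ℝ) < |l j v| + 1 := by positivity
    have h2 : t * (|l j v| + 1) ≤ l j x - lam j := (le_div_iff₀ hpos).mp hle
    nlinarith [abs_nonneg (l j v)]
  refine ⟨x + t • v, ?_, ?_, ?_⟩
  · have : (t • v) +ᵥ x ∈ W :=
      AffineSubspace.vadd_mem_of_mem_direction (W.direction.smul_mem t hv) hxW
    simpa [add_comm] using this
  · intro j hj
    rw [map_add, map_smul, hvJ j hj, hxJ j hj]
    simp
  · intro j hj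
    rw [map_add, map_smul]
    by_cases hjI : j ∈ I
    · have h1 : l j x = lam j := (hmemI j).mp hjI
      have h2 : 0 < l j v := hvI j hjI hj
      have : 0 < t * l j v := mul_pos ht_pos h2
      simp only [smul_eq_mul]
      linarith
    · have h1 := ht_le j hjI
      have h2 : -(t * |l j v|) ≤ t * l j v := by
        have := mul_le_mul_of_nonneg_left (neg_abs_le (l j v)) ht_pos.le
        linarith
      simp only [smul_eq_mul]
      linarith
end

section
/- Let V be a d-dimensional real vector space with full-rank lattice L, v ∈ L primitive, L' a complementary sublattice to ℤv, and Δ = ⋂_{j=1}^k {ℓ ∈ V^∨ : ℓ(v_j) ≥ λ_j} a polytope with primitive normals v_j = v_j' + ρ_j v (v_j' ∈ L', ρ_j ∈ ℤ) and λ_j, δ ∈ ℤ, satisfying ℓ(v) + δ > 0 for all ℓ ∈ Δ. Then the transformed polytope Δ̂ := ϱ(Δ + δv*) (where ϱ(ℓ) = (ℓ' + v*)/ℓ(v) on the half-space ℓ(v)>0, and v* is the dual covector with v*(v)=1, v*|_{L'⊗ℝ}=0) satisfies: Δ̂ = ⋂_{j=1}^k {ℓ ∈ V^∨ : ℓ(v̂_j)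 ≥ −ρ_j}, where v̂_j := v_j' − (λ_j + ρ_j δ) v ∈ L. -/
/-- The conic transform of a rational polytope: with `v ∈ L` primitive, normals
`v_j = p_j + ρ_j v` (`p_j ∈ L'`, `ρ_j ∈ ℤ`), integers `λ_j, δ` with `ℓ(v) + δ > 0`
on `Δ = ⋂ⱼ {ℓ(v_j) ≥ λ_j}`, the image `ϱ(Δ + δ v*)` under the involution
`ϱ(ℓ) = (ℓ' + v*)/ℓ(v)` is cut out (inside `{ℓ(v) > 0}`) by the inequalities
`ℓ(v̂_j) ≥ −ρ_j` with `v̂_j = p_j − (λ_j + ρ_j δ) v`. -/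
theorem conic_transform_of_polytope
    {V : Type*} [AddCommGroup V] [Module ℝ V]
    (L : Submodule ℤ V) (v : V) (hvL : v ∈ L) (hv : v ≠ 0)
    (hvprim : ∀ (k : ℕ) (y : V), y ∈ L → 0 < k → v = (k : ℤ) • y → k = 1)
    (vs : Module.Dual ℝ V) (hvs : vs v = 1)
    (ϱ : Module.Dual ℝ V → Module.Dual ℝ V)
    (hϱ : ∀ ℓ, ϱ ℓ = (ℓ v)⁻¹ • (ℓ - ℓ v • vs) + (ℓ v)⁻¹ • vs)
    {k : ℕ} (vj p : Fin k → V) (ρ lam : Fin k → ℤ) (δ : ℤ)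
    (hdec : ∀ j, vj j = p j + ρ j • v)
    (hpL : ∀ j, p j ∈ L) (hp : ∀ j, vs (p j) = 0)
    (hpos : ∀ ℓ : Module.Dual ℝ V, (∀ j, (lam j : ℝ) ≤ ℓ (vj j)) → 0 < ℓ v + δ) :
    ϱ '' ((fun ℓ => ℓ + (δ : ℝ) • vs) ''
        {ℓ : Module.Dual ℝ V | ∀ j, (lam j : ℝ) ≤ ℓ (vj j)})
      = {ℓ : Module.Dual ℝ V | 0 < ℓ v ∧
          ∀ j, (-(ρ j) : ℝ) ≤ ℓ (p j - ((lam j : ℝ) + (ρ j : ℝ) * (δ : ℝ)) • v)} := by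
  have hzs : ∀ (ℓ : Module.Dual ℝ V) (n : ℤ) (x : V), ℓ (n • x) = n * ℓ x := by
    intro ℓ n x
    rw [map_zsmul, zsmul_eq_mul]
  ext m
  simp only [Set.mem_image, Set.mem_setOf_eq]
  constructor
  · rintro ⟨_, ⟨ℓ, hℓ, rfl⟩, rfl⟩
    have ht : 0 < ℓ v + (δ : ℝ) := hpos ℓ hℓ
    set u : ℝ := (ℓ v + (δ:ℝ))⁻¹ with hudef
    have hu0 : 0 < u := by positivity
    have hu : u * (ℓ v + (δ:ℝ)) = 1 := inv_mul_cancel₀ (ne_of_gt ht)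
    constructor
    · rw [hϱ]
      simp only [LinearMap.add_apply, LinearMap.smul_apply, LinearMap.sub_apply,
        smul_eq_mul, hvs, mul_one, mul_zero, sub_zero, add_zero, ← hudef]
      nlinarith [hu, hu0]
    · intro j
      have hj : (lam j : ℝ) ≤ ℓ (p j) + ρ j * ℓ v := by
        have := hℓ j
        rwa [hdec j, map_add, hzs] at this
      rw [hϱ]
      simp only [LinearMap.add_apply, LinearMap.smul_apply, LinearMap.sub_apply,
        map_sub, map_smul, smul_eq_mul, hvs, hp, mul_one, mul_zero, sub_zero, add_zero, ← hudef]
      have h3 : (ρ j : ℝ) * (u * (ℓ v + (δ:ℝ))) = (ρ j : ℝ) := by rw [hu, mul_one]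
      nlinarith [mul_le_mul_of_nonneg_left hj hu0.le, hu, h3, hu0]
  · rintro ⟨hs, hm⟩
    set s : ℝ := m v with hsdef
    set u : ℝ := s⁻¹ with hudef
    have hu0 : 0 < u := by positivity
    have hu : u * s = 1 := inv_mul_cancel₀ (ne_of_gt hs)
    refine ⟨u • (m + (1 - s) • vs),
      ⟨u • (m + (1 - s) • vs) - (δ:ℝ) • vs, ?_, by abel⟩, ?_⟩
    · intro j
      have hmj : (-(ρ j) : ℝ) ≤ m (p j) - (↑(lam j) + ↑(ρ j) * ↑δ) * s := by
        have := hm j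
        rwa [map_sub, map_smul, smul_eq_mul] at this
      simp only [LinearMap.sub_apply, LinearMap.smul_apply, LinearMap.add_apply,
        smul_eq_mul, hdec j, map_add, hzs, hp, hvs, ← hsdef]
      have h2 : (↑(lam j) + ↑(ρ j) * ↑δ) * (u * s) = (↑(lam j) + ↑(ρ j) * ↑δ) := by
        rw [hu, mul_one]
      nlinarith [mul_le_mul_of_nonneg_left hmj hu0.le, hu, h2, hu0]
    · rw [hϱ]
      have hv' : (u • (m + (1 - s) • vs)) v = u := by
        simp only [LinearMap.smul_apply, LinearMap.add_apply, smul_eq_mul, hvs, ← hsdef]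
        ring
      rw [hv']
      ext x
      simp only [LinearMap.add_apply, LinearMap.smul_apply, LinearMap.sub_apply,
        smul_eq_mul, hudef, inv_inv]
      field_simp
      ring
end
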